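/- Let Π = ⟨a, b ∣ [a³, b] = 1, ab² = ba²⟩. The quotient of Π by the normal closure of the images of a³ and b³ is a finite group. -/

import Mathlib

open scoped commutatorElement

/-- Relators of `Π = ⟨a, b ∣ [a³, b] = 1, ab² = ba²⟩`, with `a = 0`, `b = 1`. -/
def relsC3C2 : Set (FreeGroup (Fin 2)) :=
  {⁅(FreeGroup.of 0 : FreeGroup (Fin 2)) ^ 3, FreeGroup.of 1⁆,
   FreeGroup.of 0 * FreeGroup.of 1 ^ 2 * (FreeGroup.of 1 * FreeGroup.of 0 ^ 2)⁻¹}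

/-!
Put `x = ab⁻¹`. Since `a² = a⁻¹` and `b² = b⁻¹`, the relation `ab² = ba²` reads `ab⁻¹ = ba⁻¹`,
i.e. `x² = 1`, and then `xa = b`; so the quotient satisfies `a³ = x² = (xa)³ = 1` and is a
quotient of the tetrahedral group. With `H = ⟨a⟩`, the identities `xax = a²xa²` and
`xa²x = axa` show that `H ∪ HxH` is closed under right multiplication by `a` and `x`, hence is
the whole group, which therefore has at most `3 + 9` elements.
-/

open scoped Pointwise

section

variable {G : Type*} [Group G]

theorem finite_of_closure_eq_top_of_mul_mem {T S : Set G} (hT : Subgroup.closure T = ⊤)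
    (hS : S.Finite) (hne : S.Nonempty) (hmul : ∀ s ∈ S, ∀ t ∈ T, s * t ∈ S) : Finite G := by
  obtain ⟨s₀, hs₀⟩ := hne
  have hmul_inv : ∀ s ∈ S, ∀ t ∈ T, s * t⁻¹ ∈ S := by
    intro s hs t ht
    have hbij : Set.BijOn (· * t) S S :=
      (hS.injOn_iff_bijOn_of_mapsTo fun s hs ↦ hmul s hs t ht).mp (mul_left_injective t).injOn
    obtain ⟨s', hs', rfl⟩ := hbij.surjOn hs
    simpa using hs'
  have hall (g : G) : s₀ * g ∈ S := by
    induction hT ▸ Subgroup.mem_top g using Subgroup.closure_induction_right with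
    | one => simpa using hs₀
    | mul_right g _ t ht ih => simpa [mul_assoc] using hmul _ ih t ht
    | mul_inv_cancel g _ t ht ih => simpa [mul_assoc] using hmul_inv _ ih t ht
  have := hS.to_subtype
  exact Finite.of_injective (fun g ↦ (⟨s₀ * g, hall g⟩ : S)) fun g g' h ↦ by simpa using h

/-- `H * {1, x} * H = H ∪ HxH` is closed under right multiplication by `H` and, thanks to `hx`,
by `x`; hence it is all of `G`. -/
theorem finite_of_closure_insert_eq_top {H : Subgroup G} (hH : (H : Set G).Finite) {x : G}
    (hgen : Subgroup.closure (insert x (H : Set G)) = ⊤)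
    (hx : ∀ h ∈ H, x * h * x ∈ (H : Set G) * ({1, x} : Set G) * H) : Finite G := by
  have hleft : ∀ h ∈ H, ∀ s ∈ (H : Set G) * ({1, x} : Set G) * H,
      h * s ∈ (H : Set G) * ({1, x} : Set G) * H := by
    rintro h hh _ ⟨_, ⟨h', hh', y, hy, rfl⟩, k, hk, rfl⟩
    exact ⟨_, ⟨h * h', H.mul_mem hh hh', y, hy, rfl⟩, k, hk, by group⟩
  refine finite_of_closure_eq_top_of_mul_mem hgen ((hH.mul (Set.toFinite {1, x})).mul hH)
    ⟨_, Set.mul_mem_mul (Set.mul_mem_mul H.one_mem (Set.mem_insert 1 _)) H.one_mem⟩ ?_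
  rintro _ ⟨_, ⟨h, hh, y, hy, rfl⟩, k, hk, rfl⟩ t (rfl | ht)
  · rcases hy with rfl | rfl
    · exact ⟨_, ⟨h * k, H.mul_mem hh hk, t, by simp, rfl⟩, 1, H.one_mem, by group⟩
    · simpa [mul_assoc] using hleft h hh _ (hx k hk)
  · exact ⟨_, ⟨h, hh, y, hy, rfl⟩, k * t, H.mul_mem hk ht, by group⟩

theorem mul_mul_mem_zpowers_mul_zpowers_of_tetrahedral {a x : G} (ha : a ^ 3 = 1)
    (hx : x ^ 2 = 1) (hxa : (x * a) ^ 3 = 1) :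
    ∀ h ∈ Subgroup.zpowers a,
      x * h * x ∈ (Subgroup.zpowers a : Set G) * ({1, x} : Set G) * Subgroup.zpowers a := by
  have ha_inv : a⁻¹ = a ^ 2 := inv_eq_of_mul_eq_one_right (by rw [← pow_succ', ha])
  have hx_inv : x⁻¹ = x := inv_eq_of_mul_eq_one_right (by rw [← sq, hx])
  have hxax : x * a * x = a ^ 2 * x * a ^ 2 := by
    rw [eq_inv_of_mul_eq_one_left (a := x * a * x) (b := a * x * a)
      (by rw [← hxa, pow_three]; simp only [mul_assoc])]
    simp only [mul_inv_rev, ha_inv, hx_inv, mul_assoc]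
  have hxa2x : x * a ^ 2 * x = a * x * a := by
    calc x * a ^ 2 * x = (x * a * x)⁻¹ := by simp only [mul_inv_rev, ha_inv, hx_inv, mul_assoc]
      _ = a * x * a := by simp only [hxax, mul_inv_rev, ← ha_inv, inv_inv, hx_inv, mul_assoc]
  have hmem (i j : ℕ) (y : G) (hy : y ∈ ({1, x} : Set G)) :
      a ^ i * y * a ^ j ∈ (Subgroup.zpowers a : Set G) * ({1, x} : Set G) * Subgroup.zpowers a :=
    Set.mul_mem_mul (Set.mul_mem_mul (Subgroup.npow_mem_zpowers a i) hy)
      (Subgroup.npow_mem_zpowers a j)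
  intro h hh
  obtain ⟨n, rfl⟩ := Subgroup.mem_zpowers_iff.mp hh
  rw [zpow_eq_zpow_emod' n ha]
  have h0 : 0 ≤ n % (3 : ℕ) := Int.emod_nonneg n (by norm_num)
  have h3 : n % (3 : ℕ) < 3 := Int.emod_lt_of_pos n (by norm_num)
  interval_cases n % (3 : ℕ)
  · simpa [hx_inv, ← sq, hx] using hmem 0 0 1 (by simp)
  · simpa [hxax] using hmem 2 2 x (by simp)
  · simpa [hxa2x] using hmem 1 1 x (by simp)

theorem finite_of_tetrahedral_relations {a x : G} (ha : a ^ 3 = 1) (hx : x ^ 2 = 1)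
    (hxa : (x * a) ^ 3 = 1) (hgen : Subgroup.closure {a, x} = ⊤) : Finite G := by
  refine finite_of_closure_insert_eq_top
    (isOfFinOrder_iff_pow_eq_one.2 ⟨3, by norm_num, ha⟩).finite_zpowers ?_
    (mul_mul_mem_zpowers_mul_zpowers_of_tetrahedral ha hx hxa)
  refine eq_top_iff.2 (hgen ▸ Subgroup.closure_mono ?_)
  rintro _ (rfl | rfl)
  · exact Set.mem_insert_of_mem _ (Subgroup.mem_zpowers _)
  · exact Set.mem_insert _ _

theorem finite_of_closure_eq_top_of_pow_three_of_mul_sq {a b : G}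
    (hgen : Subgroup.closure {a, b} = ⊤) (ha : a ^ 3 = 1) (hb : b ^ 3 = 1)
    (hrel : a * b ^ 2 = b * a ^ 2) : Finite G := by
  have ha_inv : a⁻¹ = a ^ 2 := inv_eq_of_mul_eq_one_right (by rw [← pow_succ', ha])
  have hb_inv : b⁻¹ = b ^ 2 := inv_eq_of_mul_eq_one_right (by rw [← pow_succ', hb])
  have hrel' : a * b⁻¹ = b * a⁻¹ := by rw [ha_inv, hb_inv, hrel]
  have hxa : a * b⁻¹ * a = b := by rw [hrel']; group
  refine finite_of_tetrahedral_relations (x := a * b⁻¹) ha ?_ (by rwa [hxa]) ?_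
  · rw [sq]; nth_rewrite 2 [hrel']; group
  · have ha_mem : a ∈ Subgroup.closure {a, a * b⁻¹} := Subgroup.subset_closure (by simp)
    have hx_mem : a * b⁻¹ ∈ Subgroup.closure {a, a * b⁻¹} := Subgroup.subset_closure (by simp)
    have hb_mem : b ∈ Subgroup.closure {a, a * b⁻¹} := by
      convert mul_mem (inv_mem hx_mem) ha_mem using 1
      group
    exact eq_top_iff.2 (hgen ▸ (Subgroup.closure_le _).2 (Set.pair_subset ha_mem hb_mem))

end

/-- The quotient of `Π = ⟨a, b ∣ [a³, b] = 1, ab² = ba²⟩` by the normal closure of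
`{a³, b³}` is a finite group. -/
theorem stmt_17 :
    Finite
      (PresentedGroup relsC3C2 ⧸
        Subgroup.normalClosure
          {(PresentedGroup.of 0 : PresentedGroup relsC3C2) ^ 3,
           (PresentedGroup.of 1 : PresentedGroup relsC3C2) ^ 3}) := by
  set N := Subgroup.normalClosure
    {(PresentedGroup.of 0 : PresentedGroup relsC3C2) ^ 3,
     (PresentedGroup.of 1 : PresentedGroup relsC3C2) ^ 3}
  set π := QuotientGroup.mk' N
  have hgen : Subgroup.closure {π (.of 0), π (.of 1)} = ⊤ := by
    rw [← Subgroup.map_top_of_surjective π (QuotientGroup.mk'_surjective N),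
      ← PresentedGroup.closure_range_of, MonoidHom.map_closure, ← Set.range_comp]
    congr 1
    ext; simp [Fin.exists_fin_two, eq_comm]
  have hpow {g} (hg : g ∈ ({.of 0 ^ 3, .of 1 ^ 3} : Set (PresentedGroup relsC3C2))) :
      π g = 1 := (QuotientGroup.eq_one_iff g).2 (Subgroup.subset_normalClosure hg)
  have hrel : PresentedGroup.of (rels := relsC3C2) 0 * .of 1 ^ 2 = .of 1 * .of 0 ^ 2 :=
    PresentedGroup.mk_eq_mk_of_mul_inv_mem (by simp [relsC3C2])
  refine finite_of_closure_eq_top_of_pow_three_of_mul_sq hgen ?_ ?_ ?_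
  · rw [← map_pow, hpow (by simp)]
  · rw [← map_pow, hpow (by simp)]
  · simp only [← map_pow, ← map_mul, hrel]
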